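/- For every λ > 0 and all X, Y ∈ 𝔨, the matrix κ_λ(X,Y) = [φ_λ(X), φ_λ(Y)] - φ_λ([X,Y]) lies in 𝔤¹; that is, all its entries vanish except possibly those in positions (0,1), (0,2) and (1,2). -/
import Mathlib


open Matrix Complex

noncomputable section

/-- The 3×3 matrix J with J₀₂ = J₁₁ = J₂₀ = 1 and all other entries 0. -/
def Jm : Matrix (Fin 3) (Fin 3) ℂ := !![0,0,1;0,1,0;1,0,0]

/-- The real Lie algebra 𝔤 = su(2,1) = {A : Aᴴ·J + J·A = 0, tr A = 0}. -/
def su21 : Set (Matrix (Fin 3) (Fin 3) ℂ) :=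
  {A | Aᴴ * Jm + Jm * A = 0 ∧ A.trace = 0}

/-- The real Lie algebra 𝔨 = su(2). -/
def su2 : Set (Matrix (Fin 2) (Fin 2) ℂ) :=
  {X | Xᴴ = -X ∧ X.trace = 0}

/-- The element X(t,z) of su(2), with rows (i·t, -conj z) and (z, -i·t). -/
def Xk (t : ℝ) (z : ℂ) : Matrix (Fin 2) (Fin 2) ℂ :=
  !![Complex.I * t, -(starRingEnd ℂ) z; z, -(Complex.I * t)]

/-- The matrix φ_λ(X(t,u+iv)) from Theorem 3.3 of the paper. -/
def phiE (l t u v : ℝ) : Matrix (Fin 3) (Fin 3) ℂ :=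
  !![(((1+l^2)/(4*l) : ℝ) : ℂ) * (Complex.I * t),
     -((((5-3*l^2)/(4*Real.sqrt l)) : ℝ) : ℂ) * u
       - ((((3-5*l^2)/(4*l*Real.sqrt l)) : ℝ) : ℂ) * (Complex.I * v),
     ((((-15+34*l^2-15*l^4)/(16*l^2)) : ℝ) : ℂ) * (Complex.I * t);
     ((Real.sqrt l : ℝ) : ℂ) * u + (((1/Real.sqrt l) : ℝ) : ℂ) * (Complex.I * v),
     -((((1+l^2)/(2*l)) : ℝ) : ℂ) * (Complex.I * t),
     ((((5-3*l^2)/(4*Real.sqrt l)) : ℝ) : ℂ) * u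
       - ((((3-5*l^2)/(4*l*Real.sqrt l)) : ℝ) : ℂ) * (Complex.I * v);
     Complex.I * t,
     -((Real.sqrt l : ℝ) : ℂ) * u + (((1/Real.sqrt l) : ℝ) : ℂ) * (Complex.I * v),
     (((1+l^2)/(4*l) : ℝ) : ℂ) * (Complex.I * t)]

/-- The ℝ-linear map φ_λ, written as a map on 2×2 matrices: for X ∈ su(2) we have
X = X(t,z) with t = (X₀₀).im and z = X₁₀, and φ_λ(X(t,u+iv)) = `phiE l t u v`. -/
def phiMap (l : ℝ) (X : Matrix (Fin 2) (Fin 2) ℂ) : Matrix (Fin 3) (Fin 3) ℂ :=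
  phiE l (X 0 0).im (X 1 0).re (X 1 0).im

/-- The curvature map κ_λ(X,Y) = [φ_λ(X), φ_λ(Y)] - φ_λ([X,Y]). -/
def kap (l : ℝ) (X Y : Matrix (Fin 2) (Fin 2) ℂ) : Matrix (Fin 3) (Fin 3) ℂ :=
  (phiMap l X * phiMap l Y - phiMap l Y * phiMap l X) - phiMap l (X * Y - Y * X)

/-- 𝔤¹ = {A ∈ 𝔤 : A₀₀ = A₁₁ = A₂₂ = A₁₀ = A₂₀ = A₂₁ = 0}. -/
def fil1 : Set (Matrix (Fin 3) (Fin 3) ℂ) :=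
  {A ∈ su21 | A 0 0 = 0 ∧ A 1 1 = 0 ∧ A 2 2 = 0 ∧ A 1 0 = 0 ∧ A 2 0 = 0 ∧ A 2 1 = 0}


set_option maxHeartbeats 2000000 in
lemma su2_eq {X : Matrix (Fin 2) (Fin 2) ℂ} (hX : X ∈ su2) :
    X = Xk (X 0 0).im (X 1 0) := by
  obtain ⟨h1, h2⟩ := hX
  have h := fun i j => congrFun (congrFun h1 i) j
  have h00 := h 0 0
  have h01 := h 0 1
  simp [Matrix.conjTranspose_apply, Matrix.neg_apply, Complex.ext_iff] at h00 h01
  rw [Matrix.trace_fin_two] at h2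
  ext i j
  fin_cases i <;> fin_cases j
  · show X 0 0 = _
    simp [Xk, Complex.ext_iff]; linarith
  · show X 0 1 = _
    simp [Xk, Complex.ext_iff]
    constructor <;> linarith [h01.1, h01.2]
  · show X 1 0 = _
    simp [Xk]
  · show X 1 1 = _
    have h2' : X 1 1 = -(X 0 0) := by linear_combination h2
    simp [Xk, h2', Complex.ext_iff]; linarith

set_option maxHeartbeats 2000000 in
lemma phiE_mem (l : ℝ) (hl : 0 < l) (t u v : ℝ) : phiE l t u v ∈ su21 := by
  have hl0 : (l:ℂ) ≠ 0 := by exact_mod_cast hl.ne'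
  have hs0 : ((Real.sqrt l : ℝ):ℂ) ≠ 0 := by
    simp [Real.sqrt_eq_zero', hl, hl.le, not_le]
    positivity
  constructor
  · ext i j
    fin_cases i <;> fin_cases j <;>
    · simp [phiE, Jm, Matrix.mul_apply, Fin.sum_univ_three, Matrix.conjTranspose_apply,
        Matrix.vecHead, Matrix.vecTail, map_ofNat]
      try field_simp
      try ring
  · simp [phiE, Matrix.trace_fin_three]
    field_simp
    ring

lemma su21_sub_bracket {A B C : Matrix (Fin 3) (Fin 3) ℂ}
    (hA : A ∈ su21) (hB : B ∈ su21) (hC : C ∈ su21) :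
    A * B - B * A - C ∈ su21 := by
  obtain ⟨hA1, hA2⟩ := hA
  obtain ⟨hB1, hB2⟩ := hB
  obtain ⟨hC1, hC2⟩ := hC
  have hA1' : Aᴴ * Jm = -(Jm * A) := eq_neg_of_add_eq_zero_left hA1
  have hB1' : Bᴴ * Jm = -(Jm * B) := eq_neg_of_add_eq_zero_left hB1
  have hC1' : Cᴴ * Jm = -(Jm * C) := eq_neg_of_add_eq_zero_left hC1
  constructor
  · have k1 : Bᴴ * Aᴴ * Jm = Jm * B * A := by
      rw [mul_assoc, hA1', mul_neg, ← mul_assoc, hB1', neg_mul, neg_neg]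
    have k2 : Aᴴ * Bᴴ * Jm = Jm * A * B := by
      rw [mul_assoc, hB1', mul_neg, ← mul_assoc, hA1', neg_mul, neg_neg]
    simp only [Matrix.conjTranspose_sub, Matrix.conjTranspose_mul, Matrix.sub_mul,
      Matrix.mul_sub, k1, k2, hC1']
    noncomm_ring
  · simp [Matrix.trace_sub, hC2, Matrix.trace_mul_comm A B]

set_option maxHeartbeats 4000000 in
lemma kap_entries (l : ℝ) (hl : 0 < l) (t1 t2 : ℝ) (z1 z2 : ℂ) :
    kap l (Xk t1 z1) (Xk t2 z2) 0 0 = 0 ∧ kap l (Xk t1 z1) (Xk t2 z2) 1 1 = 0 ∧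
    kap l (Xk t1 z1) (Xk t2 z2) 2 2 = 0 ∧ kap l (Xk t1 z1) (Xk t2 z2) 1 0 = 0 ∧
    kap l (Xk t1 z1) (Xk t2 z2) 2 0 = 0 ∧ kap l (Xk t1 z1) (Xk t2 z2) 2 1 = 0 := by
  obtain ⟨s, hs, rfl⟩ : ∃ s:ℝ, 0 < s ∧ l = s^2 :=
    ⟨Real.sqrt l, Real.sqrt_pos.2 hl, (Real.sq_sqrt hl.le).symm⟩
  have hss : Real.sqrt (s^2) = s := Real.sqrt_sq hs.le
  refine ⟨?_, ?_, ?_, ?_, ?_, ?_⟩ <;>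
  · simp [kap, phiMap, phiE, Xk, Matrix.mul_apply, Fin.sum_univ_two, Fin.sum_univ_three,
      hss, Complex.ext_iff]
    constructor <;>
    · simp only [← Complex.ofReal_inv, ← Complex.ofReal_pow, ← Complex.ofReal_ofNat,
        ← Complex.ofReal_one, ← Complex.ofReal_div, ← Complex.ofReal_mul, ← Complex.ofReal_add,
        ← Complex.ofReal_sub, ← Complex.ofReal_neg, Complex.ofReal_im, Complex.ofReal_re]
      field_simp
      ring

/-- κ_λ(X,Y) lies in 𝔤¹ for all X, Y ∈ 𝔨. -/
theorem stmt8 (l : ℝ) (hl : 0 < l) :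
    ∀ X ∈ su2, ∀ Y ∈ su2, kap l X Y ∈ fil1 := by
  intro X hX Y hY
  rw [su2_eq hX, su2_eq hY]
  have hmem : kap l (Xk (X 0 0).im (X 1 0)) (Xk (Y 0 0).im (Y 1 0)) ∈ su21 :=
    su21_sub_bracket (phiE_mem l hl _ _ _) (phiE_mem l hl _ _ _) (phiE_mem l hl _ _ _)
  obtain ⟨e1, e2, e3, e4, e5, e6⟩ := kap_entries l hl (X 0 0).im (Y 0 0).im (X 1 0) (Y 1 0)
  exact ⟨hmem, e1, e2, e3, e4, e5, e6⟩
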